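/- Let a, b > 0 with a ≠ b, let E = {(x, y) ∈ ℝ² : x²/a² + y²/b² = 1} be the ellipse, and set c = ab/√(a² + b²). Then the four points (c, c), (−c, c), (−c, −c), (c, −c) lie on E and are the consecutive vertices of a square, and this is the unique square inscribed in E: every 4-tuple of pairwise distinct points of E forming the consecutive vertices of a square has vertex set {(c, c), (−c, c), (−c, −c), (c, −c)}. -/

import Mathlib

/-!
Write the square as `m + p, m + q, m - p, m - q`; it is a square exactly when `p ≠ 0`, `p ⊥ q`
and `‖p‖ = ‖q‖`, i.e. when `q` is `p` turned by a quarter turn. Both ends of the chords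
`m ± p` and `m ± q` lie on the ellipse, so its polar form vanishes at `(m, p)` and `(m, q)`;
as `p, q` are independent, `m = 0`. Then `p` and its quarter turn both lie on the ellipse, and
subtracting the two equations gives `(p₀² - p₁²)(1/a² - 1/b²) = 0`; since `a ≠ b`,
`p₀² = p₁² = a²b²/(a² + b²) = c²`.
-/

open Real

noncomputable section

/-- The ellipse with semiaxes `a` and `b`. -/
def ellipse (a b : ℝ) : Set (EuclideanSpace ℝ (Fin 2)) :=
  {p | (p 0) ^ 2 / a ^ 2 + (p 1) ^ 2 / b ^ 2 = 1}

/-- `y₁, y₂, y₃, y₄` are the consecutive vertices of a square. -/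
def IsSquare4 (y₁ y₂ y₃ y₄ : EuclideanSpace ℝ (Fin 2)) : Prop :=
  y₁ ≠ y₂ ∧ y₁ ≠ y₃ ∧ y₁ ≠ y₄ ∧ y₂ ≠ y₃ ∧ y₂ ≠ y₄ ∧ y₃ ≠ y₄ ∧
  y₁ + y₃ = y₂ + y₄ ∧ ‖y₁ - y₂‖ = ‖y₂ - y₃‖ ∧
  (inner ℝ (y₂ - y₁) (y₃ - y₂) : ℝ) = 0

theorem Set.eq_of_subset_of_four_distinct {α : Type*} {x₁ x₂ x₃ x₄ w₁ w₂ w₃ w₄ : α}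
    (h₁₂ : x₁ ≠ x₂) (h₁₃ : x₁ ≠ x₃) (h₁₄ : x₁ ≠ x₄) (h₂₃ : x₂ ≠ x₃) (h₂₄ : x₂ ≠ x₄)
    (h₃₄ : x₃ ≠ x₄) (h : ({x₁, x₂, x₃, x₄} : Set α) ⊆ {w₁, w₂, w₃, w₄}) :
    ({x₁, x₂, x₃, x₄} : Set α) = {w₁, w₂, w₃, w₄} := by
  classical
  refine Set.eq_of_subset_of_ncard_le h ?_
  have hx : ({x₁, x₂, x₃, x₄} : Set α).ncard = 4 := by
    rw [Set.ncard_insert_of_notMem (by simp [h₁₂, h₁₃, h₁₄]),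
      Set.ncard_insert_of_notMem (by simp [h₂₃, h₂₄]), Set.ncard_pair h₃₄]
  have hw := Finset.card_le_four (a := w₁) (b := w₂) (c := w₃) (d := w₄)
  rw [← Set.ncard_coe_finset] at hw
  push_cast at hw
  omega

theorem EuclideanSpace.inner_fin_two (p q : EuclideanSpace ℝ (Fin 2)) :
    inner ℝ p q = p 0 * q 0 + p 1 * q 1 := by
  simp only [PiLp.inner_apply, Fin.sum_univ_two, RCLike.inner_apply, conj_trivial]
  ring

theorem EuclideanSpace.norm_sq_fin_two (p : EuclideanSpace ℝ (Fin 2)) :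
    ‖p‖ ^ 2 = p 0 ^ 2 + p 1 ^ 2 := by
  simp [EuclideanSpace.real_norm_sq_eq, Fin.sum_univ_two]

theorem exists_center_of_add_eq_add {V : Type*} [AddCommGroup V] [Module ℝ V]
    {y₁ y₂ y₃ y₄ : V} (h : y₁ + y₃ = y₂ + y₄) :
    ∃ m p q : V, y₁ = m + p ∧ y₂ = m + q ∧ y₃ = m - p ∧ y₄ = m - q := by
  refine ⟨(2 : ℝ)⁻¹ • (y₁ + y₃), (2 : ℝ)⁻¹ • (y₁ - y₃), (2 : ℝ)⁻¹ • (y₂ - y₄), ?_, ?_, ?_, ?_⟩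
  · module
  · linear_combination (norm := module) (-(2 : ℝ)⁻¹) • h
  · module
  · linear_combination (norm := module) (-(2 : ℝ)⁻¹) • h

theorem isSquare4_add_sub_iff (m p q : EuclideanSpace ℝ (Fin 2)) :
    IsSquare4 (m + p) (m + q) (m - p) (m - q) ↔ p ≠ 0 ∧ inner ℝ p q = 0 ∧ ‖p‖ = ‖q‖ := by
  have hside : ‖(m + p) - (m + q)‖ = ‖(m + q) - (m - p)‖ ↔ inner ℝ p q = 0 := by
    rw [add_sub_add_left_eq_sub, show (m + q) - (m - p) = p + q by abel, eq_comm,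
      InnerProductGeometry.norm_add_eq_norm_sub_iff_angle_eq_pi_div_two,
      InnerProductGeometry.inner_eq_zero_iff_angle_eq_pi_div_two]
  have hangle : inner ℝ ((m + q) - (m + p)) ((m - p) - (m + q)) = 0 ↔ ‖p‖ = ‖q‖ := by
    rw [add_sub_add_left_eq_sub, show (m - p) - (m + q) = -(q + p) by abel, inner_neg_right,
      neg_eq_zero, real_inner_comm, real_inner_add_sub_eq_zero_iff, eq_comm]
  have : IsAddTorsionFree (EuclideanSpace ℝ (Fin 2)) := .of_isTorsionFree ℝ _
  unfold IsSquare4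
  rw [hside, hangle]
  simp only [ne_eq, add_right_inj, sub_eq_add_neg, self_eq_neg, neg_inj]
  constructor
  · rintro ⟨-, hp, -, -, -, -, -, hpq, hnorm⟩
    exact ⟨hp, hpq, hnorm⟩
  · rintro ⟨hp, hpq, hnorm⟩
    have hq : q ≠ 0 := by rw [← norm_ne_zero_iff, ← hnorm]; exact norm_ne_zero_iff.2 hp
    have hpq' : p ≠ q := by rintro rfl; exact hp (inner_self_eq_zero.1 hpq)
    have hpq'' : p ≠ -q := by rintro rfl; exact hq (by simpa using hpq)
    refine ⟨hpq', hp, hpq'', fun h => hpq'' (by rw [h, neg_neg]), hq, hpq', by abel, hpq, hnorm⟩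

theorem EuclideanSpace.exists_rotation_of_inner_eq_zero_of_norm_eq {p q : EuclideanSpace ℝ (Fin 2)}
    (hpq : inner ℝ p q = 0) (hnorm : ‖p‖ = ‖q‖) :
    ∃ ε : ℝ, ε ^ 2 = 1 ∧ q 0 = -ε * p 1 ∧ q 1 = ε * p 0 := by
  rw [inner_fin_two] at hpq
  have hsq : p 0 ^ 2 + p 1 ^ 2 = q 0 ^ 2 + q 1 ^ 2 := by
    rw [← norm_sq_fin_two, ← norm_sq_fin_two, hnorm]
  rcases eq_or_ne (p 0 ^ 2 + p 1 ^ 2) 0 with hr | hr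
  · obtain ⟨hp0, hp1⟩ := (add_eq_zero_iff_of_nonneg (sq_nonneg _) (sq_nonneg _)).1 hr
    obtain ⟨hq0, hq1⟩ := (add_eq_zero_iff_of_nonneg (sq_nonneg _) (sq_nonneg _)).1 (hsq ▸ hr)
    refine ⟨1, one_pow 2, ?_, ?_⟩ <;> simp_all
  · refine ⟨(p 0 * q 1 - p 1 * q 0) / (p 0 ^ 2 + p 1 ^ 2), ?_, ?_, ?_⟩
    · field_simp
      linear_combination (-(p 0 ^ 2 + p 1 ^ 2)) * hsq - (p 0 * q 0 + p 1 * q 1) * hpq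
    · field_simp
      linear_combination p 0 * hpq
    · field_simp
      linear_combination p 1 * hpq

theorem mem_ellipse {a b : ℝ} {p : EuclideanSpace ℝ (Fin 2)} :
    p ∈ ellipse a b ↔ p 0 ^ 2 / a ^ 2 + p 1 ^ 2 / b ^ 2 = 1 :=
  Iff.rfl

theorem polar_eq_zero_of_add_mem_ellipse_of_sub_mem_ellipse {a b : ℝ}
    {m p : EuclideanSpace ℝ (Fin 2)} (hadd : m + p ∈ ellipse a b) (hsub : m - p ∈ ellipse a b) :
    m 0 * p 0 / a ^ 2 + m 1 * p 1 / b ^ 2 = 0 := by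
  simp only [mem_ellipse, PiLp.add_apply, PiLp.sub_apply] at hadd hsub
  linear_combination (hadd - hsub) / 4

theorem eq_zero_of_add_sub_mem_ellipse {a b : ℝ} (ha : a ≠ 0) (hb : b ≠ 0)
    {m p q : EuclideanSpace ℝ (Fin 2)} (hpq : p 0 * q 1 - p 1 * q 0 ≠ 0)
    (h₁ : m + p ∈ ellipse a b) (h₂ : m + q ∈ ellipse a b)
    (h₃ : m - p ∈ ellipse a b) (h₄ : m - q ∈ ellipse a b) : m = 0 := by
  have hp := polar_eq_zero_of_add_mem_ellipse_of_sub_mem_ellipse h₁ h₃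
  have hq := polar_eq_zero_of_add_mem_ellipse_of_sub_mem_ellipse h₂ h₄
  have h0 : m 0 / a ^ 2 * (p 0 * q 1 - p 1 * q 0) = 0 := by
    linear_combination q 1 * hp - p 1 * hq
  have h1 : m 1 / b ^ 2 * (p 0 * q 1 - p 1 * q 0) = 0 := by
    linear_combination p 0 * hq - q 0 * hp
  ext i
  fin_cases i
  · simpa [hpq, ha] using h0
  · simpa [hpq, hb] using h1

theorem sq_eq_of_mem_ellipse_of_rotation {a b ε : ℝ} (ha : a ≠ 0) (hb : b ≠ 0)
    (hab : a ^ 2 ≠ b ^ 2) {p q : EuclideanSpace ℝ (Fin 2)} (hε : ε ^ 2 = 1)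
    (hq0 : q 0 = -ε * p 1) (hq1 : q 1 = ε * p 0) (hp : p ∈ ellipse a b) (hq : q ∈ ellipse a b) :
    p 0 ^ 2 = a ^ 2 * b ^ 2 / (a ^ 2 + b ^ 2) ∧ p 1 ^ 2 = a ^ 2 * b ^ 2 / (a ^ 2 + b ^ 2) := by
  simp only [mem_ellipse, hq0, hq1] at hp hq
  have hq' : p 1 ^ 2 / a ^ 2 + p 0 ^ 2 / b ^ 2 = 1 := by
    linear_combination hq - (p 1 ^ 2 / a ^ 2 + p 0 ^ 2 / b ^ 2) * hε
  have hdiag : p 0 ^ 2 = p 1 ^ 2 := by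
    have h : (p 0 ^ 2 - p 1 ^ 2) * (b ^ 2 - a ^ 2) = 0 := by
      field_simp at hp hq'
      linear_combination hp - hq'
    linear_combination (mul_eq_zero.1 h).resolve_right (sub_ne_zero.2 hab.symm)
  have hsum : a ^ 2 + b ^ 2 ≠ 0 := by positivity
  rw [← hdiag, and_self]
  field_simp at hp ⊢
  linear_combination hp + a ^ 2 * hdiag

theorem mem_ellipse_of_sq_eq {a b u v : ℝ} (ha : a ≠ 0) (hb : b ≠ 0)
    (hu : u ^ 2 = a ^ 2 * b ^ 2 / (a ^ 2 + b ^ 2)) (hv : v ^ 2 = a ^ 2 * b ^ 2 / (a ^ 2 + b ^ 2)) :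
    !₂[u, v] ∈ ellipse a b := by
  have hsum : a ^ 2 + b ^ 2 ≠ 0 := by positivity
  rw [mem_ellipse]
  simp only [Matrix.cons_val_zero, Matrix.cons_val_one, hu, hv]
  field_simp
  ring

theorem mem_corners_of_sq_eq {c : ℝ} {p : EuclideanSpace ℝ (Fin 2)} (h0 : p 0 ^ 2 = c ^ 2)
    (h1 : p 1 ^ 2 = c ^ 2) :
    p ∈ ({!₂[c, c], !₂[-c, c], !₂[-c, -c], !₂[c, -c]} : Set (EuclideanSpace ℝ (Fin 2))) := by
  have hp : p = !₂[p 0, p 1] := by ext i; fin_cases i <;> rfl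
  rcases sq_eq_sq_iff_eq_or_eq_neg.1 h0 with h0 | h0 <;>
    rcases sq_eq_sq_iff_eq_or_eq_neg.1 h1 with h1 | h1 <;>
    · rw [hp, h0, h1]; simp

theorem isSquare4_corners {c : ℝ} (hc : c ≠ 0) :
    IsSquare4 !₂[c, c] !₂[-c, c] !₂[-c, -c] !₂[c, -c] := by
  have h := (isSquare4_add_sub_iff 0 !₂[c, c] !₂[-c, c]).2 ⟨?_, ?_, ?_⟩
  · convert h using 1 <;> ext i <;> fin_cases i <;> simp
  · intro h0
    simpa [hc] using congrArg (· 0) h0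
  · simp [EuclideanSpace.inner_fin_two]
  · simp [EuclideanSpace.norm_eq, Fin.sum_univ_two]

/-- A noncircular ellipse has a unique inscribed square, namely the one with vertices
`(±c, ±c)` where `c = ab/√(a² + b²)`. -/
theorem ellipse_unique_inscribed_square
    (a b : ℝ) (ha : 0 < a) (hb : 0 < b) (hab : a ≠ b)
    (c : ℝ) (hc : c = a * b / Real.sqrt (a ^ 2 + b ^ 2)) :
    ((!₂[c, c] : EuclideanSpace ℝ (Fin 2)) ∈ ellipse a b ∧
     (!₂[-c, c] : EuclideanSpace ℝ (Fin 2)) ∈ ellipse a b ∧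
     (!₂[-c, -c] : EuclideanSpace ℝ (Fin 2)) ∈ ellipse a b ∧
     (!₂[c, -c] : EuclideanSpace ℝ (Fin 2)) ∈ ellipse a b ∧
     IsSquare4 !₂[c, c] !₂[-c, c] !₂[-c, -c] !₂[c, -c]) ∧
    ∀ z₁ z₂ z₃ z₄ : EuclideanSpace ℝ (Fin 2),
      z₁ ∈ ellipse a b → z₂ ∈ ellipse a b → z₃ ∈ ellipse a b → z₄ ∈ ellipse a b →
      IsSquare4 z₁ z₂ z₃ z₄ →
      ({z₁, z₂, z₃, z₄} : Set (EuclideanSpace ℝ (Fin 2))) =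
        {(!₂[c, c] : EuclideanSpace ℝ (Fin 2)), !₂[-c, c], !₂[-c, -c], !₂[c, -c]} := by
  have hc2 : c ^ 2 = a ^ 2 * b ^ 2 / (a ^ 2 + b ^ 2) := by
    rw [hc, div_pow, mul_pow, sq_sqrt (by positivity)]
  have hab2 : a ^ 2 ≠ b ^ 2 := by rwa [Ne, sq_eq_sq₀ ha.le hb.le]
  have hcorner {u v : ℝ} (hu : u ^ 2 = c ^ 2) (hv : v ^ 2 = c ^ 2) : !₂[u, v] ∈ ellipse a b :=
    mem_ellipse_of_sq_eq ha.ne' hb.ne' (hu.trans hc2) (hv.trans hc2)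
  refine ⟨⟨hcorner rfl rfl, hcorner (neg_sq c) rfl, hcorner (neg_sq c) (neg_sq c),
    hcorner rfl (neg_sq c), isSquare4_corners (by rw [hc]; positivity)⟩, ?_⟩
  intro z₁ z₂ z₃ z₄ h₁ h₂ h₃ h₄ hsq
  obtain ⟨m, p, q, rfl, rfl, rfl, rfl⟩ := exists_center_of_add_eq_add hsq.2.2.2.2.2.2.1
  obtain ⟨hp, hpq, hnorm⟩ := (isSquare4_add_sub_iff m p q).1 hsq
  obtain ⟨ε, hε, hq0, hq1⟩ := EuclideanSpace.exists_rotation_of_inner_eq_zero_of_norm_eq hpq hnorm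
  have hdet : p 0 * q 1 - p 1 * q 0 ≠ 0 := by
    rw [hq0, hq1, show p 0 * (ε * p 0) - p 1 * (-ε * p 1) = ε * ‖p‖ ^ 2 by
      rw [EuclideanSpace.norm_sq_fin_two]; ring]
    exact mul_ne_zero (by rintro rfl; norm_num at hε) (pow_ne_zero 2 (norm_ne_zero_iff.2 hp))
  obtain rfl := eq_zero_of_add_sub_mem_ellipse ha.ne' hb.ne' hdet h₁ h₂ h₃ h₄
  simp only [zero_add, zero_sub] at h₁ h₂ hsq ⊢
  obtain ⟨hp0, hp1⟩ := sq_eq_of_mem_ellipse_of_rotation ha.ne' hb.ne' hab2 hε hq0 hq1 h₁ h₂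
  obtain ⟨h12, h13, h14, h23, h24, h34, -⟩ := hsq
  refine Set.eq_of_subset_of_four_distinct h12 h13 h14 h23 h24 h34 ?_
  rw [← hc2] at hp0 hp1
  have hq0' : q 0 ^ 2 = c ^ 2 := by rw [hq0]; linear_combination hp1 + p 1 ^ 2 * hε
  have hq1' : q 1 ^ 2 = c ^ 2 := by rw [hq1]; linear_combination hp0 + p 0 ^ 2 * hε
  simp only [Set.insert_subset_iff, Set.singleton_subset_iff]
  exact ⟨mem_corners_of_sq_eq hp0 hp1, mem_corners_of_sq_eq hq0' hq1',
    mem_corners_of_sq_eq (by simpa using hp0) (by simpa using hp1),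
    mem_corners_of_sq_eq (by simpa using hq0') (by simpa using hq1')⟩
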